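/- arXiv:2107.06241 — 6 statements merged into one kernel-verified Lean document; each statement's English description precedes it below -/
import Mathlib

section
/- Let ℓ be an odd prime dividing q−1 and let Q be a nontrivial ℓ-subgroup of SL₂(F) with Q ≤ T. Then the normalizer of Q in SL₂(F) is equal to the subgroup generated by T and the matrix σ = [[0,−1],[1,0]]. -/
open Matrix
open scoped MatrixGroups

def diagonalTorus (F : Type*) [Field F] : Subgroup SL(2, F) where
  carrier := {g | (g : Matrix (Fin 2) (Fin 2) F) 0 1 = 0 ∧
    (g : Matrix (Fin 2) (Fin 2) F) 1 0 = 0}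
  one_mem' := by
    constructor <;> simp [Matrix.SpecialLinearGroup.coe_one, Matrix.one_apply]
  mul_mem' := by
    rintro a b ⟨ha1, ha2⟩ ⟨hb1, hb2⟩
    constructor <;>
    · simp only [Matrix.SpecialLinearGroup.coe_mul, Matrix.mul_apply, Fin.sum_univ_two]
      simp [ha1, ha2, hb1, hb2]
  inv_mem' := by
    rintro a ⟨h1, h2⟩
    constructor <;>
      simp [Matrix.SpecialLinearGroup.coe_inv, Matrix.adjugate_fin_two, h1, h2]

def sigmaSL (F : Type*) [Field F] : SL(2, F) :=
  ⟨!![0, -1; 1, 0], by norm_num [Matrix.det_fin_two_of]⟩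

/-!
A nontrivial element `t` of `Q` has odd order, so `t² ≠ 1` and the two diagonal entries of `t`
differ. If `g` normalizes `Q`, then `g t g⁻¹ = y` is diagonal, and comparing entries of
`g t = y g` shows that no row of `g` has two nonzero entries; hence `g` is diagonal or
antidiagonal, i.e. `g ∈ T ∪ T σ`. Conversely `T` is abelian and conjugation by `σ` inverts `T`,
so `T` and `σ` normalize every subgroup of `T`.
-/

theorem IsPGroup.eq_one_of_sq_eq_one {p : ℕ} {G : Type*} [Group G] (hG : IsPGroup p G)
    (hp : Odd p) {g : G} (hg : g ^ 2 = 1) : g = 1 :=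
  (hG.powEquiv (Nat.coprime_two_right.mpr hp)).injective (by simp [hg])

theorem Subgroup.mem_normalizer_of_conj_mem {G : Type*} [Group G] {H : Subgroup G} {g : G}
    (h₁ : ∀ h ∈ H, g * h * g⁻¹ ∈ H) (h₂ : ∀ h ∈ H, g⁻¹ * h * g ∈ H) : g ∈ normalizer H :=
  mem_normalizer_iff.mpr fun h ↦ ⟨h₁ h, fun hh ↦ by simpa [mul_assoc] using h₂ _ hh⟩

section
variable {F : Type*} [Field F]

local notation:1024 "↑ₘ" A:1024 => ((A : SL(2, F)) : Matrix (Fin 2) (Fin 2) F)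

theorem coe_sigmaSL : ↑ₘ(sigmaSL F) = !![0, -1; 1, 0] := rfl

theorem coe_sigmaSL_inv : ↑ₘ(sigmaSL F)⁻¹ = !![0, 1; -1, 0] := by
  rw [Matrix.SpecialLinearGroup.coe_inv, coe_sigmaSL, adjugate_fin_two_of]
  simp

theorem coe_eq_diagonal_of_mem_diagonalTorus {t : SL(2, F)} (ht : t ∈ diagonalTorus F) :
    ↑ₘt = diagonal fun i ↦ ↑ₘt i i := by
  ext i j
  fin_cases i <;> fin_cases j <;> simp [ht.1, ht.2]

theorem mul_comm_of_mem_diagonalTorus {x y : SL(2, F)} (hx : x ∈ diagonalTorus F)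
    (hy : y ∈ diagonalTorus F) : x * y = y * x := by
  refine Subtype.ext ?_
  change ↑ₘ(x * y) = ↑ₘ(y * x)
  rw [Matrix.SpecialLinearGroup.coe_mul, Matrix.SpecialLinearGroup.coe_mul,
    coe_eq_diagonal_of_mem_diagonalTorus hx, coe_eq_diagonal_of_mem_diagonalTorus hy,
    diagonal_mul_diagonal, diagonal_mul_diagonal]
  simp only [mul_comm]

theorem sq_eq_one_of_mem_diagonalTorus {t : SL(2, F)} (ht : t ∈ diagonalTorus F)
    (h : ↑ₘt 0 0 = ↑ₘt 1 1) : t ^ 2 = 1 := by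
  have hdet : ↑ₘt 1 1 * ↑ₘt 1 1 = 1 := by
    have hdet := t.det_coe
    rwa [det_fin_two, ht.1, ht.2, h, mul_zero, sub_zero] at hdet
  refine Subtype.ext ?_
  change ↑ₘ(t ^ 2) = ↑ₘ1
  rw [Matrix.SpecialLinearGroup.coe_pow, coe_eq_diagonal_of_mem_diagonalTorus ht, diagonal_pow,
    Matrix.SpecialLinearGroup.coe_one, ← diagonal_one]
  congr 1
  ext i
  fin_cases i <;> simp [sq, hdet, h]

theorem sigmaSL_mul_mul_inv {t : SL(2, F)} (ht : t ∈ diagonalTorus F) :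
    sigmaSL F * t * (sigmaSL F)⁻¹ = t⁻¹ := by
  refine Subtype.ext ?_
  change ↑ₘ(sigmaSL F * t * (sigmaSL F)⁻¹) = ↑ₘt⁻¹
  rw [Matrix.SpecialLinearGroup.coe_mul, Matrix.SpecialLinearGroup.coe_mul, coe_sigmaSL,
    coe_sigmaSL_inv, Matrix.SpecialLinearGroup.coe_inv, adjugate_fin_two, eta_fin_two ↑ₘt]
  simp [ht.1, ht.2]

theorem inv_sigmaSL_mul_mul {t : SL(2, F)} (ht : t ∈ diagonalTorus F) :
    (sigmaSL F)⁻¹ * t * sigmaSL F = t⁻¹ := by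
  have h := sigmaSL_mul_mul_inv ((diagonalTorus F).inv_mem ht)
  rw [inv_inv] at h
  calc (sigmaSL F)⁻¹ * t * sigmaSL F
      = (sigmaSL F)⁻¹ * (sigmaSL F * t⁻¹ * (sigmaSL F)⁻¹) * sigmaSL F := by rw [h]
    _ = t⁻¹ := by group

theorem mul_sigmaSL_inv_mem_diagonalTorus {g : SL(2, F)} (h₀ : ↑ₘg 0 0 = 0) (h₁ : ↑ₘg 1 1 = 0) :
    g * (sigmaSL F)⁻¹ ∈ diagonalTorus F := by
  constructor <;>
    simp [Matrix.SpecialLinearGroup.coe_mul, -Matrix.SpecialLinearGroup.coe_inv, coe_sigmaSL_inv,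
      mul_apply, h₀, h₁]

theorem apply_eq_of_mul_eq_mul {t y g : SL(2, F)} (ht : t ∈ diagonalTorus F)
    (hy : y ∈ diagonalTorus F) (hg : g * t = y * g) {i j : Fin 2} (hij : ↑ₘg i j ≠ 0) :
    ↑ₘy i i = ↑ₘt j j := by
  have := congr_arg (fun A : SL(2, F) ↦ ↑ₘA i j) hg
  simp only [Matrix.SpecialLinearGroup.coe_mul] at this
  rw [coe_eq_diagonal_of_mem_diagonalTorus ht, coe_eq_diagonal_of_mem_diagonalTorus hy,
    mul_diagonal, diagonal_mul] at this
  exact (mul_left_cancel₀ hij (this.trans (mul_comm _ _))).symm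

theorem mem_diagonalTorus_or_mul_sigmaSL_inv_mem_of_conj_mem {t g : SL(2, F)}
    (ht : t ∈ diagonalTorus F) (hne : ↑ₘt 0 0 ≠ ↑ₘt 1 1) (hg : g * t * g⁻¹ ∈ diagonalTorus F) :
    g ∈ diagonalTorus F ∨ g * (sigmaSL F)⁻¹ ∈ diagonalTorus F := by
  have hrow : ∀ i, ↑ₘg i 0 = 0 ∨ ↑ₘg i 1 = 0 := by
    intro i
    by_contra! h
    have hgt : g * t = g * t * g⁻¹ * g := by group
    exact hne ((apply_eq_of_mul_eq_mul ht hg hgt h.1).symm.trans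
      (apply_eq_of_mul_eq_mul ht hg hgt h.2))
  have hdet : ↑ₘg 0 0 * ↑ₘg 1 1 - ↑ₘg 0 1 * ↑ₘg 1 0 = 1 := by
    rw [← det_fin_two]
    exact g.det_coe
  rcases hrow 0 with h00 | h01 <;> rcases hrow 1 with h10 | h11
  · simp [h00, h10] at hdet
  · exact Or.inr (mul_sigmaSL_inv_mem_diagonalTorus h00 h11)
  · exact Or.inl ⟨h01, h10⟩
  · simp [h01, h11] at hdet

theorem exists_mem_apply_ne_of_isPGroup {ℓ : ℕ} (hℓ : Odd ℓ) {Q : Subgroup SL(2, F)}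
    (hQp : IsPGroup ℓ Q) (hQ : Q ≠ ⊥) (hQT : Q ≤ diagonalTorus F) :
    ∃ t ∈ Q, ↑ₘt 0 0 ≠ ↑ₘt 1 1 := by
  obtain ⟨t, htQ, ht⟩ := Q.bot_or_exists_ne_one.resolve_left hQ
  refine ⟨t, htQ, fun h ↦ ht ?_⟩
  have hsq : (⟨t, htQ⟩ : Q) ^ 2 = 1 := Subtype.ext (sq_eq_one_of_mem_diagonalTorus (hQT htQ) h)
  simpa using congr_arg Subtype.val (hQp.eq_one_of_sq_eq_one hℓ hsq)

theorem normalizer_le_closure_diagonalTorus_union_sigmaSL {Q : Subgroup SL(2, F)}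
    (hQT : Q ≤ diagonalTorus F) {t : SL(2, F)} (htQ : t ∈ Q) (hne : ↑ₘt 0 0 ≠ ↑ₘt 1 1) :
    Subgroup.normalizer (Q : Set SL(2, F)) ≤
      Subgroup.closure ((diagonalTorus F : Set SL(2, F)) ∪ {sigmaSL F}) := by
  intro g hg
  have hgt : g * t * g⁻¹ ∈ diagonalTorus F := hQT ((Subgroup.mem_normalizer_iff.mp hg t).mp htQ)
  have hσ : sigmaSL F ∈ Subgroup.closure ((diagonalTorus F : Set SL(2, F)) ∪ {sigmaSL F}) :=
    Subgroup.subset_closure (Or.inr rfl)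
  rcases mem_diagonalTorus_or_mul_sigmaSL_inv_mem_of_conj_mem (hQT htQ) hne hgt with hgT | hgσ
  · exact Subgroup.subset_closure (Or.inl hgT)
  · simpa using Subgroup.mul_mem _ (Subgroup.subset_closure (Set.mem_union_left _ hgσ)) hσ

theorem closure_diagonalTorus_union_sigmaSL_le_normalizer {Q : Subgroup SL(2, F)}
    (hQT : Q ≤ diagonalTorus F) :
    Subgroup.closure ((diagonalTorus F : Set SL(2, F)) ∪ {sigmaSL F}) ≤
      Subgroup.normalizer (Q : Set SL(2, F)) := by
  rw [Subgroup.closure_le, Set.union_subset_iff, Set.singleton_subset_iff]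
  refine ⟨fun x hx ↦ Subgroup.centralizer_le_normalizer _ (Subgroup.mem_centralizer_iff.mpr
    fun h hh ↦ mul_comm_of_mem_diagonalTorus (hQT hh) hx), ?_⟩
  refine Subgroup.mem_normalizer_of_conj_mem (fun h hh ↦ ?_) (fun h hh ↦ ?_)
  · rw [sigmaSL_mul_mul_inv (hQT hh)]
    exact Q.inv_mem hh
  · rw [inv_sigmaSL_mul_mul (hQT hh)]
    exact Q.inv_mem hh

end

theorem normalizer_eq_of_isPGroup_le_torus_general
    (F : Type*) [Field F] (ℓ : ℕ) (hℓ_odd : Odd ℓ)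
    (Q : Subgroup SL(2, F)) (hQp : IsPGroup ℓ Q) (hQ_ne_bot : Q ≠ ⊥)
    (hQT : Q ≤ diagonalTorus F) :
    Subgroup.normalizer (Q : Set SL(2, F)) = Subgroup.closure ((diagonalTorus F : Set SL(2, F)) ∪ {sigmaSL F}) := by
  obtain ⟨t, htQ, hne⟩ := exists_mem_apply_ne_of_isPGroup hℓ_odd hQp hQ_ne_bot hQT
  exact le_antisymm (normalizer_le_closure_diagonalTorus_union_sigmaSL hQT htQ hne)
    (closure_diagonalTorus_union_sigmaSL_le_normalizer hQT)

/-- If `ℓ` is an odd prime dividing `q - 1` and `Q` is a nontrivial `ℓ`-subgroup of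
`SL(2, F)` contained in the split torus `T`, then `N_G(Q) = ⟨T, σ⟩`. -/
theorem normalizer_eq_of_isPGroup_le_torus
    (F : Type*) [Field F] [Fintype F] (q ℓ : ℕ) (hq : Fintype.card F = q)
    (hq_odd : Odd q) (hℓ : ℓ.Prime) (hℓ_odd : Odd ℓ) (hdvd : ℓ ∣ q - 1)
    (Q : Subgroup SL(2, F)) (hQp : IsPGroup ℓ Q) (hQ_ne_bot : Q ≠ ⊥)
    (hQT : Q ≤ diagonalTorus F) :
    Subgroup.normalizer (Q : Set SL(2, F)) = Subgroup.closure ((diagonalTorus F : Set SL(2, F)) ∪ {sigmaSL F}) :=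
  normalizer_eq_of_isPGroup_le_torus_general F ℓ hℓ_odd Q hQp hQ_ne_bot hQT
end

section
/- Let ℓ be an odd prime dividing q−1. Then there exists a Sylow ℓ-subgroup of SL₂(F) contained in the diagonal torus T, and every Sylow ℓ-subgroup of SL₂(F) is cyclic. -/
open Matrix
open scoped MatrixGroups

theorem Nat.Prime.not_dvd_mul_add_one_of_dvd_sub_one {ℓ q : ℕ} (hℓ : ℓ.Prime) (hℓ_odd : Odd ℓ)
    (hq : q ≠ 0) (hdvd : ℓ ∣ q - 1) : ¬ ℓ ∣ q * (q + 1) := by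
  rw [hℓ.dvd_mul]
  rintro (h | h)
  · have h1 : ℓ ∣ 1 := by
      have : q - (q - 1) = 1 := by omega
      simpa [this] using Nat.dvd_sub h hdvd
    exact hℓ.one_lt.ne' (Nat.dvd_one.mp h1)
  · have h2 : ℓ ∣ 2 := by
      have : q + 1 - (q - 1) = 2 := by omega
      simpa [this] using Nat.dvd_sub h hdvd
    exact hℓ_odd.ne_two_of_dvd_nat dvd_rfl ((Nat.prime_dvd_prime_iff_eq hℓ Nat.prime_two).mp h2)

section Sylow

variable {G : Type*} [Group G] [Finite G] {p : ℕ} [Fact p.Prime]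

theorem Sylow.exists_le_of_not_dvd_index {H : Subgroup G} (h : ¬ p ∣ H.index) :
    ∃ P : Sylow p G, P ≤ H := by
  obtain ⟨Q⟩ : Nonempty (Sylow p H) := inferInstance
  have hQ : ¬ p ∣ (Q.map H.subtype).index := by
    rw [Subgroup.index_map_subtype]
    exact Nat.Prime.not_dvd_mul Fact.out Q.not_dvd_index h
  exact ⟨(Q.2.map H.subtype).toSylow hQ, Subgroup.map_subtype_le _⟩

theorem Sylow.isCyclic_of_le {H : Subgroup G} [IsCyclic H] {P : Sylow p G} (hP : P ≤ H)
    (Q : Sylow p G) : IsCyclic Q :=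
  have := Subgroup.isCyclic_of_le hP
  isCyclic_of_surjective _ (Q.equiv P).symm.surjective

end Sylow

theorem Matrix.card_specialLinearGroup_mul_card_units {n R : Type*} [Fintype n] [DecidableEq n]
    [Nonempty n] [CommRing R] :
    Nat.card (SpecialLinearGroup n R) * Nat.card Rˣ = Nat.card (GL n R) := by
  have hker : Nat.card (SpecialLinearGroup n R) =
      Nat.card (GeneralLinearGroup.det (n := n) (R := R)).ker :=
    Nat.card_congr ((Equiv.ofInjective _ SpecialLinearGroup.toGL_injective).trans
      (Equiv.setCongr SpecialLinearGroup.range_toGL))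
  rw [hker, ← Subgroup.card_top (G := Rˣ),
    ← MonoidHom.range_eq_top.mpr (GeneralLinearGroup.det_surjective (n := n) (R := R)),
    ← Subgroup.index_ker, Subgroup.card_mul_index]

namespace diagonalTorus

variable {F : Type*} [Field F]

lemma coe_apply_zero_zero_mul_one_one (g : diagonalTorus F) :
    (g : Matrix (Fin 2) (Fin 2) F) 0 0 * (g : Matrix (Fin 2) (Fin 2) F) 1 1 = 1 := by
  have hdet := (g : SL(2, F)).det_coe
  rwa [Matrix.det_fin_two, g.2.1, zero_mul, sub_zero] at hdet

def equivUnits : diagonalTorus F ≃* Fˣ where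
  toFun g := ⟨_, _, coe_apply_zero_zero_mul_one_one g,
    by rw [mul_comm]; exact coe_apply_zero_zero_mul_one_one g⟩
  invFun a := ⟨⟨Matrix.diagonal ![(a : F), ((a⁻¹ : Fˣ) : F)], by simp [Matrix.det_diagonal]⟩,
    by simp, by simp⟩
  left_inv g := by
    obtain ⟨g, h01, h10⟩ := g
    ext i j
    fin_cases i <;> fin_cases j <;> simp [h01, h10]
  right_inv a := by ext; simp
  map_mul' g h := by
    ext
    simp [Matrix.mul_apply, Fin.sum_univ_two, g.2.1, h.2.2]

instance [Finite F] : IsCyclic (diagonalTorus F) :=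
  isCyclic_of_surjective _ equivUnits.symm.surjective

theorem _root_.card_diagonalTorus [Fintype F] : Nat.card (diagonalTorus F) = Fintype.card F - 1 := by
  rw [Nat.card_congr equivUnits.toEquiv, Nat.card_units, Nat.card_eq_fintype_card]

theorem _root_.index_diagonalTorus [Fintype F] :
    (diagonalTorus F).index = Fintype.card F * (Fintype.card F + 1) := by
  have hG := (diagonalTorus F).card_mul_index
  have hSL := card_specialLinearGroup_mul_card_units (n := Fin 2) (R := F)
  rw [card_GL_field, Fin.prod_univ_two, Nat.card_units, Nat.card_eq_fintype_card (α := F), ← hG,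
    card_diagonalTorus] at hSL
  obtain ⟨r, hr⟩ : ∃ r, Fintype.card F = r + 2 :=
    ⟨Fintype.card F - 2, by have := Fintype.one_lt_card (α := F); omega⟩
  rw [hr] at hSL ⊢
  simp only [Fin.val_zero, Fin.val_one, pow_zero, pow_one] at hSL
  refine Nat.eq_of_mul_eq_mul_left (Nat.mul_pos r.succ_pos r.succ_pos) ?_
  zify [show 1 ≤ r + 2 by omega, show 1 ≤ (r + 2) ^ 2 by nlinarith,
    show r + 2 ≤ (r + 2) ^ 2 by nlinarith] at hSL ⊢
  linear_combination hSL

end diagonalTorus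

theorem sylow_le_torus_and_cyclic_of_dvd_sub_one_general
    (F : Type*) [Field F] [Fintype F] (q ℓ : ℕ) (hq : Fintype.card F = q)
    (hℓ : ℓ.Prime) (hℓ_odd : Odd ℓ) (hdvd : ℓ ∣ q - 1) :
    (∃ P : Sylow ℓ SL(2, F), (P : Subgroup SL(2, F)) ≤ diagonalTorus F) ∧
      (∀ P : Sylow ℓ SL(2, F), IsCyclic (P : Subgroup SL(2, F))) := by
  have : Fact ℓ.Prime := ⟨hℓ⟩
  have hindex : ¬ ℓ ∣ (diagonalTorus F).index := by
    rw [index_diagonalTorus, hq]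
    exact hℓ.not_dvd_mul_add_one_of_dvd_sub_one hℓ_odd (hq ▸ Fintype.card_ne_zero) hdvd
  obtain ⟨P, hP⟩ := Sylow.exists_le_of_not_dvd_index hindex
  exact ⟨⟨P, hP⟩, Sylow.isCyclic_of_le hP⟩

/-- If `ℓ` is an odd prime dividing `q - 1`, then some Sylow `ℓ`-subgroup of `SL(2, F)`
is contained in the split torus `T`, and every Sylow `ℓ`-subgroup of `SL(2, F)` is cyclic. -/
theorem sylow_le_torus_and_cyclic_of_dvd_sub_one
    (F : Type*) [Field F] [Fintype F] (q ℓ : ℕ) (hq : Fintype.card F = q)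
    (hq_odd : Odd q) (hℓ : ℓ.Prime) (hℓ_odd : Odd ℓ) (hdvd : ℓ ∣ q - 1) :
    (∃ P : Sylow ℓ SL(2, F), (P : Subgroup SL(2, F)) ≤ diagonalTorus F) ∧
      (∀ P : Sylow ℓ SL(2, F), IsCyclic (P : Subgroup SL(2, F))) :=
  sylow_le_torus_and_cyclic_of_dvd_sub_one_general F q ℓ hq hℓ hℓ_odd hdvd
end

section
/- Let ℓ be an odd prime dividing q+1. Then every Sylow ℓ-subgroup of SL₂(F) is cyclic, of order equal to the ℓ-part of q+1 (the largest power of ℓ dividing q+1). -/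
/-!
Let `K` be the quadratic extension of `F`; `Kˣ` is cyclic of order `q² - 1 = (q + 1)(q - 1)`.
If `N ∣ q + 1` is prime to `q - 1`, an element of `Kˣ` of order `N` has norm of order dividing
both `N` and `q - 1`, i.e. norm `1`, so multiplication by it on `K ≅ F²` is an element of
`SL₂(F)` of order `N`. For `N` the `ℓ`-part of `q + 1` this is the full `ℓ`-part of `|SL₂(F)|`,
because `|SL₂(F)|` divides `|GL₂(F)| = (q + 1)(q - 1) q (q - 1)` and `ℓ ∤ q (q - 1)`. So the
cyclic group it generates is a Sylow `ℓ`-subgroup, and all the others are conjugate to it.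
-/

open Matrix
open scoped MatrixGroups

theorem IsCyclic.exists_orderOf_eq_of_dvd {G : Type*} [Group G] [Finite G] [IsCyclic G] {d : ℕ}
    (hd : d ∣ Nat.card G) : ∃ g : G, orderOf g = d := by
  obtain ⟨g, hg⟩ := IsCyclic.exists_ofOrder_eq_natCard (α := G)
  exact ⟨g ^ (orderOf g / d), orderOf_pow_orderOf_div (hg ▸ Nat.card_pos.ne') (hg ▸ hd)⟩

theorem eq_one_of_pow_eq_one_of_coprime_natCard {G : Type*} [Group G] {x : G} {n : ℕ}
    (hx : x ^ n = 1) (hn : n.Coprime (Nat.card G)) : x = 1 :=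
  orderOf_eq_one_iff.mp <|
    Nat.eq_one_of_dvd_coprimes hn (orderOf_dvd_of_pow_eq_one hx) (orderOf_dvd_natCard x)

theorem Sylow.isCyclic_of_orderOf_eq {G : Type*} [Group G] [Finite G] {p : ℕ} [Fact p.Prime]
    {g : G} (hg : orderOf g = p ^ (Nat.card G).factorization p) (P : Sylow p G) : IsCyclic P :=
  let Q := Sylow.ofCard (Subgroup.zpowers g) (by rw [Nat.card_zpowers, hg])
  have : IsCyclic Q := Subgroup.isCyclic_zpowers g
  isCyclic_of_surjective _ (Q.equiv P).surjective

theorem Matrix.card_GL_two_field (F : Type*) [Field F] [Fintype F] :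
    Nat.card (GL (Fin 2) F) =
      (Fintype.card F + 1) * ((Fintype.card F - 1) * (Fintype.card F * (Fintype.card F - 1))) := by
  rw [card_GL_field, Fin.prod_univ_two, Fin.val_zero, Fin.val_one, pow_zero, pow_one,
    ← one_pow 2, Nat.sq_sub_sq, one_pow, sq, ← Nat.mul_sub_one]
  ring

namespace Matrix.SpecialLinearGroup

theorem exists_orderOf_eq_of_norm_eq_one {R S ι : Type*} [CommRing R] [Ring S] [Algebra R S]
    [Fintype ι] [DecidableEq ι] (b : Module.Basis ι R S) {x : S} (hx : Algebra.norm R x = 1) :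
    ∃ g : SpecialLinearGroup ι R, orderOf g = orderOf x := by
  let g : SpecialLinearGroup ι R :=
    ⟨Algebra.leftMulMatrix b x, by rwa [← Algebra.norm_eq_matrix_det]⟩
  refine ⟨g, ?_⟩
  rw [← orderOf_injective coeMonoidHom Subtype.val_injective g,
    ← orderOf_injective (Algebra.leftMulMatrix b).toMonoidHom (Algebra.leftMulMatrix_injective b) x]
  rfl

theorem exists_orderOf_eq_of_dvd_card_add_one (F : Type*) [Field F] [Fintype F] {N : ℕ}
    (hN : N ∣ Fintype.card F + 1) (hcop : N.Coprime (Fintype.card F - 1)) :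
    ∃ g : SL(2, F), orderOf g = N := by
  obtain ⟨p, _⟩ := CharP.exists F
  have : Fact p.Prime := ⟨CharP.char_is_prime F p⟩
  let K := FiniteField.Extension F p 2
  have hK : Nat.card Kˣ = (Fintype.card F + 1) * (Fintype.card F - 1) := by
    rw [Nat.card_units, FiniteField.natCard_extension, Nat.card_eq_fintype_card, ← Nat.sq_sub_sq,
      one_pow]
  obtain ⟨x, hx⟩ := IsCyclic.exists_orderOf_eq_of_dvd (hK ▸ dvd_mul_of_dvd_left hN _)
  have hnorm : Units.map (Algebra.norm F) x = 1 := by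
    refine eq_one_of_pow_eq_one_of_coprime_natCard (n := N) ?_ ?_
    · rw [← map_pow, ← hx, pow_orderOf_eq_one, map_one]
    · rwa [Nat.card_units, Nat.card_eq_fintype_card]
  obtain ⟨g, hg⟩ := exists_orderOf_eq_of_norm_eq_one
    (Module.finBasisOfFinrankEq F K (FiniteField.finrank_extension F p 2))
    (congrArg Units.val hnorm)
  exact ⟨g, hg.trans (orderOf_units.trans hx)⟩

theorem factorization_card_SL_two_le (F : Type*) [Field F] [Fintype F] {ℓ : ℕ} (hℓ : ℓ.Prime)
    (hq : ¬ ℓ ∣ Fintype.card F) (hq1 : ¬ ℓ ∣ Fintype.card F - 1) :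
    (Nat.card SL(2, F)).factorization ℓ ≤ (Fintype.card F + 1).factorization ℓ := by
  have hSL : Nat.card SL(2, F) ∣ Nat.card (GL (Fin 2) F) :=
    Subgroup.card_dvd_of_injective _ toGL_injective
  rw [card_GL_two_field] at hSL
  have hq' := hℓ.coprime_iff_not_dvd.2 hq
  have hq1' := hℓ.coprime_iff_not_dvd.2 hq1
  have hcop : Nat.Coprime (ordProj[ℓ] (Nat.card SL(2, F)))
      ((Fintype.card F - 1) * (Fintype.card F * (Fintype.card F - 1))) :=
    .pow_left _ (.mul_right hq1' (.mul_right hq' hq1'))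
  rw [← hℓ.pow_dvd_iff_le_factorization (Nat.succ_ne_zero _)]
  exact hcop.dvd_of_dvd_mul_right ((Nat.ordProj_dvd _ _).trans hSL)

end Matrix.SpecialLinearGroup

theorem sylow_cyclic_of_dvd_add_one_general
    (F : Type*) [Field F] [Fintype F] (q ℓ : ℕ) (hq : Fintype.card F = q)
    (hℓ : ℓ.Prime) (hℓ_odd : Odd ℓ) (hdvd : ℓ ∣ q + 1) :
    ∀ P : Sylow ℓ SL(2, F), IsCyclic (P : Subgroup SL(2, F)) ∧
      Nat.card (P : Subgroup SL(2, F)) = ℓ ^ ((q + 1).factorization ℓ) := by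
  subst hq
  have : Fact ℓ.Prime := ⟨hℓ⟩
  have hq_pos : 0 < Fintype.card F := Fintype.card_pos
  have hℓq : ¬ ℓ ∣ Fintype.card F := fun h ↦ hℓ.not_dvd_one ((Nat.dvd_add_right h).mp hdvd)
  have hℓq1 : ¬ ℓ ∣ Fintype.card F - 1 := by
    intro h
    have h2 : ℓ ∣ Fintype.card F + 1 - (Fintype.card F - 1) := Nat.dvd_sub hdvd h
    rw [show Fintype.card F + 1 - (Fintype.card F - 1) = 2 by omega,
      Nat.prime_dvd_prime_iff_eq hℓ Nat.prime_two] at h2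
    exact Nat.not_odd_iff_even.2 even_two (h2 ▸ hℓ_odd)
  obtain ⟨g, hg⟩ :=
    SpecialLinearGroup.exists_orderOf_eq_of_dvd_card_add_one F (Nat.ordProj_dvd _ ℓ)
      (.pow_left _ (hℓ.coprime_iff_not_dvd.2 hℓq1))
  have hv : (Nat.card SL(2, F)).factorization ℓ = (Fintype.card F + 1).factorization ℓ :=
    (SpecialLinearGroup.factorization_card_SL_two_le F hℓ hℓq hℓq1).antisymm <|
      (hℓ.pow_dvd_iff_le_factorization Nat.card_pos.ne').mp (hg ▸ orderOf_dvd_natCard g)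
  intro P
  exact ⟨Sylow.isCyclic_of_orderOf_eq (hv ▸ hg) P, by rw [P.card_eq_multiplicity, hv]⟩

/-- If `ℓ` is an odd prime dividing `q + 1`, then every Sylow `ℓ`-subgroup of `SL(2, F)`
is cyclic of order the `ℓ`-part of `q + 1`. -/
theorem sylow_cyclic_of_dvd_add_one
    (F : Type*) [Field F] [Fintype F] (q ℓ : ℕ) (hq : Fintype.card F = q)
    (hq_odd : Odd q) (hℓ : ℓ.Prime) (hℓ_odd : Odd ℓ) (hdvd : ℓ ∣ q + 1) :
    ∀ P : Sylow ℓ SL(2, F), IsCyclic (P : Subgroup SL(2, F)) ∧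
      Nat.card (P : Subgroup SL(2, F)) = ℓ ^ ((q + 1).factorization ℓ) :=
  sylow_cyclic_of_dvd_add_one_general F q ℓ hq hℓ hℓ_odd hdvd
end

section
/- Let ℓ be an odd prime dividing q−1 and let Q be any nontrivial ℓ-subgroup of SL₂(F). Then the centralizer of Q in SL₂(F) is cyclic of order q−1, and the normalizer of Q in SL₂(F) has cardinality 2(q−1). -/
/-!
The center of the `ℓ`-group `Q` contains an element `x` of order `ℓ`. Since `ℓ ∣ q - 1`, the
polynomial `X ^ ℓ - 1` splits over `F` with simple roots, so `x` is diagonalizable over `F`;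
since `ℓ` is odd, `x ≠ 1` forces its eigenvalues `a, a⁻¹` to be distinct. After conjugation,
`x = diag(a, a⁻¹)` is regular, so its centralizer is the diagonal torus `T ≅ Fˣ`, cyclic of order
`q - 1`. As `x` is central in `Q`, `Q ≤ T` and `C(Q) = T`. An element normalizing `Q` conjugates
`x` to a diagonal matrix of the same trace, that is to `x` or `x⁻¹`, hence lies in `T` or in `T w`
for the Weyl element `w`; since `w` inverts `T`, `N(Q) = T ∪ T w` has order `2 (q - 1)`.
-/

open Matrix
open scoped MatrixGroups

section
open Polynomial
variable {F : Type*} [Field F]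

theorem eq_algebraMap_of_minpoly_dvd_pow {A : Type*} [Ring A] [Algebra F A] {x : A}
    (hsep : (minpoly F x).Separable) {a : F} {k : ℕ} (h : minpoly F x ∣ (X - C a) ^ k) :
    x = algebraMap F A a := by
  have := minpoly.dvd_iff.mp (hsep.squarefree.isRadical k _ h)
  rwa [map_sub, aeval_X, aeval_C, sub_eq_zero] at this

namespace Matrix

theorem exists_isRoot_charpoly_of_aeval_eq_zero {n : Type*} [Fintype n] [DecidableEq n]
    [Nonempty n] {M : Matrix n n F} {p : F[X]} (hp : p ≠ 0) (hsplit : p.Splits)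
    (hM : aeval M p = 0) : ∃ μ, M.charpoly.IsRoot μ := by
  have hdvd := minpoly.dvd F M hM
  have hdeg : (minpoly F M).degree ≠ 0 :=
    (minpoly.degree_pos (Algebra.IsIntegral.isIntegral M)).ne'
  obtain ⟨μ, hμ⟩ := (hsplit.of_dvd hp hdvd).exists_eval_eq_zero hdeg
  exact ⟨μ, IsRoot.dvd hμ (minpoly_dvd_charpoly M)⟩

theorem exists_det_eq_one_mul_eq_mul_diagonal {M : Matrix (Fin 2) (Fin 2) F} {μ : Fin 2 → F}
    (hμ : μ 0 ≠ μ 1) (hroot : ∀ i, M.charpoly.IsRoot (μ i)) :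
    ∃ P : Matrix (Fin 2) (Fin 2) F, P.det = 1 ∧ M * P = P * diagonal μ := by
  have hev (i : Fin 2) : Module.End.HasEigenvalue (toLin' M) (μ i) := by
    rw [Module.End.hasEigenvalue_iff_isRoot_charpoly, charpoly_toLin']
    exact hroot i
  choose v hv using fun i => (hev i).exists_hasEigenvector
  have hμinj : Function.Injective μ := by
    intro i j h
    fin_cases i <;> fin_cases j <;> simp_all [eq_comm]
  have hindep := Module.End.eigenvectors_linearIndependent' (toLin' M) μ hμinj v hv
  set P : Matrix (Fin 2) (Fin 2) F := (of v)ᵀ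
  have hdet : P.det ≠ 0 := by
    rw [det_transpose, ← isUnit_iff_ne_zero, ← isUnit_iff_isUnit_det]
    exact linearIndependent_rows_iff_isUnit.mp hindep
  have hMP : M * P = P * diagonal μ := by
    ext i j
    rw [mul_diagonal]
    simpa [P, mul_apply, mulVec, dotProduct, mul_comm] using congrFun (hv j).apply_eq_smul i
  refine ⟨P * diagonal ![P.det⁻¹, 1], ?_, ?_⟩
  · simp [det_mul, det_diagonal, Fin.prod_univ_two, hdet]
  · rw [← Matrix.mul_assoc, hMP, Matrix.mul_assoc, Matrix.mul_assoc, diagonal_mul_diagonal,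
      diagonal_mul_diagonal, funext fun i => mul_comm (μ i) _]

end Matrix
end

theorem Subgroup.map_equiv_centralizer_eq {G N : Type*} [Group G] [Group N] (H : Subgroup G)
    (f : G ≃* N) :
    (centralizer (H : Set G)).map f.toMonoidHom = centralizer (H.map f.toMonoidHom : Set N) := by
  ext x
  simp only [mem_centralizer_iff, mem_map_equiv, SetLike.mem_coe]
  rw [f.toEquiv.forall_congr]
  simp [← f.symm.injective.eq_iff (a := _ * x)]

theorem IsPGroup.exists_mem_center_ne_one_pow_eq_one {G : Type*} [Group G] [Finite G]
    [Nontrivial G] {p : ℕ} [Fact p.Prime] (hG : IsPGroup p G) :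
    ∃ z ∈ Subgroup.center G, z ≠ 1 ∧ z ^ p = 1 := by
  have := hG.center_nontrivial
  obtain ⟨n, hn, hcard⟩ := (hG.to_subgroup (Subgroup.center G)).nontrivial_iff_card.mp this
  obtain ⟨z, hz⟩ := exists_prime_orderOf_dvd_card' (G := Subgroup.center G) p
    (hcard ▸ dvd_pow_self p hn.ne')
  rw [← Subgroup.orderOf_coe] at hz
  refine ⟨z, z.2, fun h => ?_, hz ▸ pow_orderOf_eq_one _⟩
  rw [h, orderOf_one] at hz
  exact (Fact.out : p.Prime).one_lt.ne hz

section FiniteField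
open Polynomial
variable {F : Type*} [Field F] [Fintype F]

theorem FiniteField.cast_ne_zero_of_dvd_card_sub_one {n : ℕ} (h : n ∣ Fintype.card F - 1) :
    (n : F) ≠ 0 := by
  obtain ⟨k, hk⟩ := h
  have hcast : ((Fintype.card F - 1 : ℕ) : F) = -1 := by
    rw [Nat.cast_sub Fintype.card_pos, FiniteField.cast_card_eq_zero, Nat.cast_one, zero_sub]
  intro h0
  rw [hk, Nat.cast_mul, h0, zero_mul] at hcast
  exact one_ne_zero (neg_eq_zero.mp hcast.symm)

theorem FiniteField.X_pow_sub_one_splits_of_dvd {ℓ : ℕ} [Fact ℓ.Prime]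
    (h : ℓ ∣ Fintype.card F - 1) : (X ^ ℓ - 1 : F[X]).Splits := by
  obtain ⟨ζ, hζ⟩ := exists_prime_orderOf_dvd_card' (G := Fˣ) ℓ
    (by rwa [Nat.card_units, Nat.card_eq_fintype_card])
  have hprim := IsPrimitiveRoot.orderOf ζ
  rw [hζ] at hprim
  exact X_pow_sub_one_splits (IsPrimitiveRoot.coe_units_iff.mpr hprim)

end FiniteField

namespace SL2

open Matrix.SpecialLinearGroup

variable {F : Type*} [Field F]

noncomputable def diagHom : Fˣ →* SL(2, F) where
  toFun a := diag2 a a.ne_zero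
  map_one' := by ext i j; fin_cases i <;> fin_cases j <;> simp [diag2_coe']
  map_mul' a b := by
    ext i j; fin_cases i <;> fin_cases j <;> simp [diag2_coe', mul_comm]

@[simp]
lemma coe_diagHom (a : Fˣ) :
    (diagHom a : Matrix (Fin 2) (Fin 2) F) = !![(a : F), 0; 0, (a : F)⁻¹] :=
  diag2_coe' a.ne_zero

variable (F) in
noncomputable def torus : Subgroup SL(2, F) := (diagHom : Fˣ →* SL(2, F)).range

instance : IsMulCommutative (torus F) :=
  inferInstanceAs (IsMulCommutative (diagHom : Fˣ →* SL(2, F)).range)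

lemma diagHom_injective : Function.Injective (diagHom : Fˣ →* SL(2, F)) := fun a b h => by
  have := congrArg (fun g : SL(2, F) => g 0 0) h
  exact Units.ext (by simpa using this)

lemma mem_torus_iff {g : SL(2, F)} : g ∈ torus F ↔ g 0 1 = 0 ∧ g 1 0 = 0 := by
  refine ⟨?_, fun ⟨h01, h10⟩ => ?_⟩
  · rintro ⟨a, rfl⟩
    simp
  · have hdet : g 0 0 * g 1 1 = 1 := by
      have := g.det_coe
      rwa [det_fin_two, h01, zero_mul, sub_zero] at this
    refine ⟨Units.mk0 (g 0 0) (left_ne_zero_of_mul_eq_one hdet), ?_⟩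
    ext i j
    fin_cases i <;> fin_cases j <;> simp [h01, h10, eq_inv_of_mul_eq_one_right hdet]

def weyl : SL(2, F) := ⟨!![0, 1; -1, 0], by simp [det_fin_two_of]⟩

@[simp]
lemma coe_weyl : ((weyl : SL(2, F)) : Matrix (Fin 2) (Fin 2) F) = !![0, 1; -1, 0] := rfl

lemma weyl_not_mem_torus : weyl ∉ torus F := by
  simp [mem_torus_iff]

lemma weyl_mul_diagHom (a : Fˣ) : weyl * diagHom a = diagHom a⁻¹ * weyl := by
  ext i j; fin_cases i <;> fin_cases j <;> simp [coe_mul]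

lemma weyl_mul_of_mem_torus {t : SL(2, F)} (ht : t ∈ torus F) : weyl * t = t⁻¹ * weyl := by
  obtain ⟨a, rfl⟩ := ht
  rw [weyl_mul_diagHom, map_inv]

lemma mem_torus_of_commute_diagHom {a : Fˣ} (ha : a ≠ a⁻¹) {g : SL(2, F)}
    (h : g * diagHom a = diagHom a * g) : g ∈ torus F := by
  have ha' : (a : F) - (a : F)⁻¹ ≠ 0 := by
    rwa [sub_ne_zero, ← Units.val_inv_eq_inv_val, Ne, Units.val_inj]
  have hcancel {c : F} (hc : c * ((a : F) - (a : F)⁻¹) = 0) : c = 0 :=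
    (mul_eq_zero.mp hc).resolve_right ha'
  have h01 : g 0 1 * (a : F)⁻¹ = a * g 0 1 := by
    simpa [coe_mul, mul_apply, Fin.sum_univ_two] using congrArg (fun k : SL(2, F) => k 0 1) h
  have h10 : g 1 0 * a = (a : F)⁻¹ * g 1 0 := by
    simpa [coe_mul, mul_apply, Fin.sum_univ_two] using congrArg (fun k : SL(2, F) => k 1 0) h
  exact mem_torus_iff.mpr
    ⟨hcancel (by linear_combination -h01), hcancel (by linear_combination h10)⟩

lemma torus_le_centralizer {s : Set SL(2, F)} (hs : s ⊆ torus F) :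
    torus F ≤ Subgroup.centralizer s :=
  (torus F).le_centralizer.trans (Subgroup.centralizer_le hs)

lemma centralizer_diagHom {a : Fˣ} (ha : a ≠ a⁻¹) :
    Subgroup.centralizer {diagHom a} = torus F := by
  refine le_antisymm (fun g hg => mem_torus_of_commute_diagHom ha ?_) ?_
  · exact Subgroup.mem_centralizer_singleton_iff.mp hg
  · exact torus_le_centralizer (Set.singleton_subset_iff.mpr ⟨a, rfl⟩)

lemma eq_or_eq_inv_of_conj_diagHom {a b : Fˣ} {g : SL(2, F)}
    (h : g * diagHom a * g⁻¹ = diagHom b) : b = a ∨ b = a⁻¹ := by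
  have htr : (b : F) + (b : F)⁻¹ = a + (a : F)⁻¹ := by
    have hconj : ((g * diagHom a * g⁻¹ : SL(2, F)) : Matrix (Fin 2) (Fin 2) F).trace =
        (diagHom a : Matrix (Fin 2) (Fin 2) F).trace := by
      rw [coe_mul, coe_mul, trace_mul_cycle, ← coe_mul g⁻¹, inv_mul_cancel, coe_one, one_mul]
    rw [h] at hconj
    simpa [trace_fin_two] using hconj
  have hprod : ((b : F) - a) * ((b : F) - (a : F)⁻¹) = 0 := by
    linear_combination (b : F) * htr - mul_inv_cancel₀ b.ne_zero + mul_inv_cancel₀ a.ne_zero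
  rcases mul_eq_zero.mp hprod with h | h
  · exact Or.inl (Units.ext (sub_eq_zero.mp h))
  · exact Or.inr (Units.ext (by simpa using sub_eq_zero.mp h))

lemma card_torus : Nat.card (torus F) = Nat.card F - 1 := by
  rw [torus, ← Nat.card_congr (MonoidHom.ofInjective diagHom_injective).toEquiv, Nat.card_units]

lemma isCyclic_torus [Finite F] : IsCyclic (torus F) :=
  isCyclic_of_surjective (diagHom : Fˣ →* SL(2, F)).rangeRestrict
    (MonoidHom.rangeRestrict_surjective _)

lemma map_conj_le_torus {Q : Subgroup SL(2, F)} {x g : SL(2, F)} {a : Fˣ} (ha : a ≠ a⁻¹)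
    (hxQ : ∀ y ∈ Q, Commute y x) (hg : g⁻¹ * x * g = diagHom a) :
    Q.map (MulAut.conj g⁻¹).toMonoidHom ≤ torus F := by
  rintro _ ⟨y, hy, rfl⟩
  have := (hxQ y hy).map (MulAut.conj g⁻¹)
  rw [MulAut.conj_apply (g⁻¹) x, inv_inv, hg] at this
  exact mem_torus_of_commute_diagHom ha this.eq

section RegularSubgroup

variable {Q : Subgroup SL(2, F)} (hQ : Q ≤ torus F) {a : Fˣ} (ha : a ≠ a⁻¹)
  (haQ : diagHom a ∈ Q)
include hQ

lemma weyl_mem_normalizer : weyl ∈ Subgroup.normalizer (Q : Set SL(2, F)) := by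
  have hconj {t : SL(2, F)} (ht : t ∈ torus F) : weyl * t * weyl⁻¹ = t⁻¹ := by
    rw [weyl_mul_of_mem_torus ht, mul_inv_cancel_right]
  have hconj' {t : SL(2, F)} (ht : t ∈ torus F) : weyl⁻¹ * t * weyl = t⁻¹ := by
    have := weyl_mul_of_mem_torus (inv_mem ht)
    rw [inv_inv] at this
    rw [mul_assoc, ← this, inv_mul_cancel_left]
  refine Subgroup.mem_normalizer_iff.mpr fun h => ⟨fun hh => ?_, fun hh => ?_⟩
  · rw [hconj (hQ hh)]
    exact inv_mem hh
  · have e : h = (weyl * h * weyl⁻¹)⁻¹ := by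
      rw [← hconj' (hQ hh)]
      group
    rw [e]
    exact inv_mem hh

include ha haQ

lemma centralizer_eq_torus : Subgroup.centralizer (Q : Set SL(2, F)) = torus F :=
  le_antisymm ((Subgroup.centralizer_le (Set.singleton_subset_iff.mpr haQ)).trans_eq
    (centralizer_diagHom ha)) (torus_le_centralizer hQ)

lemma mem_torus_or_mul_weyl_mem_torus {g : SL(2, F)}
    (hg : g ∈ Subgroup.normalizer (Q : Set SL(2, F))) :
    g ∈ torus F ∨ g * weyl ∈ torus F := by
  obtain ⟨b, hb⟩ := hQ ((Subgroup.mem_normalizer_iff.mp hg _).mp haQ)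
  rcases eq_or_eq_inv_of_conj_diagHom hb.symm with rfl | rfl
  · exact Or.inl (mem_torus_of_commute_diagHom ha (mul_inv_eq_iff_eq_mul.mp hb.symm))
  · have hg' : g * diagHom a⁻¹ = diagHom a * g :=
      calc g * diagHom a⁻¹ = (g * diagHom a * g⁻¹)⁻¹ * g := by rw [map_inv]; group
        _ = diagHom a * g := by rw [← hb, map_inv, inv_inv]
    refine Or.inr (mem_torus_of_commute_diagHom ha ?_)
    rw [mul_assoc, weyl_mul_diagHom, ← mul_assoc, hg', mul_assoc]

lemma card_normalizer :
    Nat.card (Subgroup.normalizer (Q : Set SL(2, F))) = 2 * Nat.card (torus F) := by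
  have hTN : torus F ≤ Subgroup.normalizer (Q : Set SL(2, F)) :=
    (torus_le_centralizer hQ).trans (Subgroup.centralizer_le_normalizer _)
  have hindex : (torus F).relIndex (Subgroup.normalizer (Q : Set SL(2, F))) = 2 := by
    refine Subgroup.relIndex_eq_two_iff.mpr ⟨weyl, weyl_mem_normalizer hQ, fun b hb => ?_⟩
    have hnot : ¬(b * weyl ∈ torus F ∧ b ∈ torus F) := fun ⟨hbw, hb⟩ =>
      weyl_not_mem_torus (by simpa using mul_mem (inv_mem hb) hbw)
    rcases mem_torus_or_mul_weyl_mem_torus hQ ha haQ hb with h | h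
    · exact Or.inr ⟨h, fun h' => hnot ⟨h', h⟩⟩
    · exact Or.inl ⟨h, fun h' => hnot ⟨h, h'⟩⟩
  rw [← Subgroup.relIndex_bot_left, ← Subgroup.relIndex_mul_relIndex _ _ _ bot_le hTN, hindex,
    Subgroup.relIndex_bot_left, mul_comm]

end RegularSubgroup

section Diagonalization
open Polynomial

lemma eval_charpoly_coe (x : SL(2, F)) (μ : F) :
    (x : Matrix (Fin 2) (Fin 2) F).charpoly.eval μ =
      μ ^ 2 - (x : Matrix (Fin 2) (Fin 2) F).trace * μ + 1 := by
  simp [charpoly_fin_two]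

lemma exists_conj_eq_diagHom {x : SL(2, F)} {a : Fˣ} (ha : a ≠ a⁻¹)
    (hroot : (x : Matrix (Fin 2) (Fin 2) F).charpoly.IsRoot a) :
    ∃ g : SL(2, F), g⁻¹ * x * g = diagHom a := by
  have hroot' : (x : Matrix (Fin 2) (Fin 2) F).charpoly.IsRoot (a : F)⁻¹ := by
    rw [IsRoot, eval_charpoly_coe] at hroot ⊢
    field_simp
    linear_combination hroot
  have hne : (a : F) ≠ (a : F)⁻¹ := by
    rwa [← Units.val_inv_eq_inv_val, Ne, Units.val_inj]
  obtain ⟨P, hP, hxP⟩ := exists_det_eq_one_mul_eq_mul_diagonal (μ := ![(a : F), (a : F)⁻¹])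
    hne (Fin.forall_fin_two.mpr ⟨hroot, hroot'⟩)
  let g : SL(2, F) := ⟨P, hP⟩
  refine ⟨g, ?_⟩
  rw [mul_assoc, inv_mul_eq_iff_eq_mul]
  apply Subtype.ext
  show (x : Matrix (Fin 2) (Fin 2) F) * P = P * (diagHom a : Matrix (Fin 2) (Fin 2) F)
  rw [hxP, coe_diagHom, diagonal_vec2]

lemma eq_one_of_isRoot_charpoly_of_mul_self_eq_one {x : SL(2, F)} {n : ℕ} (hn : Odd n)
    (hsep : (minpoly F (x : Matrix (Fin 2) (Fin 2) F)).Separable) (hx : x ^ n = 1) {μ : F}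
    (hroot : (x : Matrix (Fin 2) (Fin 2) F).charpoly.IsRoot μ) (hμ : μ * μ = 1) : x = 1 := by
  set M := (x : Matrix (Fin 2) (Fin 2) F)
  have htr : M.trace = 2 * μ := by
    rw [IsRoot, eval_charpoly_coe] at hroot
    linear_combination (-μ) * hroot + (μ - M.trace) * hμ
  have hcp : M.charpoly = (X - C μ) ^ 2 := by
    rw [charpoly_fin_two, htr, x.det_coe, ← hμ, C_mul, C_mul, map_ofNat C 2]
    ring
  have hMμ : M = algebraMap F _ μ :=
    eq_algebraMap_of_minpoly_dvd_pow hsep (hcp ▸ minpoly_dvd_charpoly M)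
  have hμn : μ ^ n = 1 := by
    have hMn : M ^ n = 1 := by
      rw [← Matrix.SpecialLinearGroup.coe_pow, hx, Matrix.SpecialLinearGroup.coe_one]
    rw [hMμ, ← map_pow, ← map_one (algebraMap F (Matrix (Fin 2) (Fin 2) F))] at hMn
    exact (algebraMap F _).injective hMn
  have hμ1 : μ = 1 := by
    obtain ⟨k, rfl⟩ := hn
    calc μ = (μ * μ) ^ k * μ := by rw [hμ, one_pow, one_mul]
      _ = μ ^ (2 * k + 1) := by ring
      _ = 1 := hμn
  apply Subtype.ext
  rw [Matrix.SpecialLinearGroup.coe_one]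
  exact hMμ.trans (by rw [hμ1, map_one])

theorem exists_conj_eq_diagHom_of_pow_eq_one {x : SL(2, F)} {n : ℕ} (hn : (n : F) ≠ 0)
    (hn_odd : Odd n) (hsplit : (X ^ n - 1 : F[X]).Splits) (hx : x ^ n = 1) (hx1 : x ≠ 1) :
    ∃ (g : SL(2, F)) (a : Fˣ), a ≠ a⁻¹ ∧ g⁻¹ * x * g = diagHom a := by
  set M := (x : Matrix (Fin 2) (Fin 2) F)
  have hM : aeval M (X ^ n - 1 : F[X]) = 0 := by
    simp [M, ← Matrix.SpecialLinearGroup.coe_pow, hx]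
  have hsep : (minpoly F M).Separable := by
    refine (separable_X_pow_sub_C 1 hn one_ne_zero).of_dvd ?_
    simpa using minpoly.dvd F M hM
  have hne : (X ^ n - 1 : F[X]) ≠ 0 := by
    simpa using X_pow_sub_C_ne_zero (Nat.pos_of_ne_zero fun h => hn (by simp [h])) (1 : F)
  obtain ⟨μ, hμ⟩ := exists_isRoot_charpoly_of_aeval_eq_zero hne hsplit hM
  have hμ0 : μ ≠ 0 := by
    rintro rfl
    simp [IsRoot, M, eval_charpoly_coe] at hμ
  set a := Units.mk0 μ hμ0
  have ha : a ≠ a⁻¹ := by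
    intro h
    have hμμ : μ = μ⁻¹ := by simpa [a] using congrArg Units.val h
    refine hx1 (eq_one_of_isRoot_charpoly_of_mul_self_eq_one hn_odd hsep hx hμ ?_)
    nth_rewrite 2 [hμμ]
    exact mul_inv_cancel₀ hμ0
  obtain ⟨g, hg⟩ := exists_conj_eq_diagHom ha hμ
  exact ⟨g, a, ha, hg⟩

end Diagonalization

end SL2

theorem centralizer_cyclic_and_normalizer_card_sub_one_general
    (F : Type*) [Field F] [Fintype F] (q ℓ : ℕ) (hq : Fintype.card F = q)
    (hℓ : ℓ.Prime) (hℓ_odd : Odd ℓ) (hdvd : ℓ ∣ q - 1)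
    (Q : Subgroup SL(2, F)) (hQp : IsPGroup ℓ Q) (hQ_ne_bot : Q ≠ ⊥) :
    IsCyclic (Subgroup.centralizer (Q : Set SL(2, F))) ∧
      Nat.card (Subgroup.centralizer (Q : Set SL(2, F))) = q - 1 ∧
      Nat.card (Subgroup.normalizer (Q : Set SL(2, F))) = 2 * (q - 1) := by
  subst hq
  have : Fact ℓ.Prime := ⟨hℓ⟩
  have : Nontrivial Q := Q.nontrivial_iff_ne_bot.mpr hQ_ne_bot
  obtain ⟨z, hz, hz1, hzℓ⟩ := hQp.exists_mem_center_ne_one_pow_eq_one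
  have hcomm : ∀ y ∈ Q, Commute y (z : SL(2, F)) := fun y hy =>
    congrArg Subtype.val (Subgroup.mem_center_iff.mp hz ⟨y, hy⟩)
  obtain ⟨g, a, ha, hg⟩ := SL2.exists_conj_eq_diagHom_of_pow_eq_one (x := z)
    (FiniteField.cast_ne_zero_of_dvd_card_sub_one hdvd) hℓ_odd
    (FiniteField.X_pow_sub_one_splits_of_dvd hdvd) (by exact_mod_cast hzℓ)
    (by exact_mod_cast hz1)
  set φ := MulAut.conj g⁻¹
  have hQT := SL2.map_conj_le_torus ha hcomm hg
  have haQ : SL2.diagHom a ∈ Q.map φ.toMonoidHom := ⟨z, z.2, by rw [← hg]; simp [φ]⟩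
  have hC : Subgroup.centralizer (Q : Set SL(2, F)) ≃* SL2.torus F :=
    (Subgroup.equivMapOfInjective _ φ.toMonoidHom φ.injective).trans <|
      MulEquiv.subgroupCongr <| by
        rw [Subgroup.map_equiv_centralizer_eq, SL2.centralizer_eq_torus hQT ha haQ]
  refine ⟨(MulEquiv.isCyclic hC).mpr SL2.isCyclic_torus, ?_, ?_⟩
  · rw [Nat.card_congr hC.toEquiv, SL2.card_torus, Nat.card_eq_fintype_card]
  · rw [← Subgroup.card_map_of_injective (f := φ.toMonoidHom) φ.injective,
      Subgroup.map_equiv_normalizer_eq, SL2.card_normalizer hQT ha haQ, SL2.card_torus,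
      Nat.card_eq_fintype_card]

/-- If `ℓ` is an odd prime dividing `q - 1` and `Q` is a nontrivial `ℓ`-subgroup of
`SL(2, F)`, then the centralizer of `Q` is cyclic of order `q - 1` and the normalizer
of `Q` has cardinality `2 (q - 1)`. -/
theorem centralizer_cyclic_and_normalizer_card_sub_one
    (F : Type*) [Field F] [Fintype F] (q ℓ : ℕ) (hq : Fintype.card F = q)
    (hq_odd : Odd q) (hℓ : ℓ.Prime) (hℓ_odd : Odd ℓ) (hdvd : ℓ ∣ q - 1)
    (Q : Subgroup SL(2, F)) (hQp : IsPGroup ℓ Q) (hQ_ne_bot : Q ≠ ⊥) :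
    IsCyclic (Subgroup.centralizer (Q : Set SL(2, F))) ∧
      Nat.card (Subgroup.centralizer (Q : Set SL(2, F))) = q - 1 ∧
      Nat.card (Subgroup.normalizer (Q : Set SL(2, F))) = 2 * (q - 1) :=
  centralizer_cyclic_and_normalizer_card_sub_one_general F q ℓ hq hℓ hℓ_odd hdvd Q hQp hQ_ne_bot
end

section
/- Assume q ≡ 3 (mod 8) or q ≡ 5 (mod 8). Then every Sylow 2-subgroup of SL₂(F) is isomorphic to the quaternion group of order 8 (i.e. to QuaternionGroup 2). -/
open Matrix
open scoped MatrixGroups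

/-!
Since `|SL₂(F_q)| = q(q² - 1)` and `q² ≡ 9 (mod 16)` for `q ≡ ±3 (mod 8)`, a Sylow
2-subgroup `P` has order 8. An involution of `SL₂(F)` equals its own adjugate, hence is `-1`, so
`P` has a unique involution. If `g⁴ = -1`, Cayley–Hamilton gives `tr(g²) = 0`, i.e.
`tr(g)² = 2`; but `2` is a non-square in `F` exactly when `q ≡ ±3 (mod 8)`, so `P` has exponent 4.
Finally, in a group of order 8 and exponent 4 with a unique involution, any `x` of order 4 and
`y ∉ ⟨x⟩` satisfy `y² = (yx)² = x²`, which gives `yxy⁻¹ = x⁻¹` and the presentation of `Q₈`.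
-/

section ZModPow

variable {G : Type*} [Group G] {m : ℕ} {x : G}

theorem zpow_zmod_cast_of_intCast_eq (hx : x ^ m = 1) {i : ZMod m} {k : ℤ}
    (hk : (k : ZMod m) = i) : x ^ (i.cast : ℤ) = x ^ k := by
  refine zpow_eq_zpow_iff_modEq.mpr (Int.ModEq.of_dvd
    (Int.natCast_dvd_natCast.mpr (orderOf_dvd_of_pow_eq_one hx)) ?_)
  rw [← ZMod.intCast_eq_intCast_iff, ZMod.intCast_zmod_cast, hk]

end ZModPow

namespace QuaternionGroup

variable {n : ℕ} {G : Type*} [Group G] {x y : G}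

def lift (hx : x ^ (2 * n) = 1) (hy : y ^ 2 = x ^ n) (hyx : y * x * y⁻¹ = x⁻¹) :
    QuaternionGroup n →* G where
  toFun
    | a i => x ^ (i.cast : ℤ)
    | xa i => y * x ^ (i.cast : ℤ)
  map_one' := by
    rw [one_def]
    simp
  map_mul' := by
    have hpow : ∀ {i : ZMod (2 * n)} {k : ℤ}, (k : ZMod (2 * n)) = i →
        x ^ (i.cast : ℤ) = x ^ k := zpow_zmod_cast_of_intCast_eq hx
    have hconj : ∀ k : ℤ, y * x ^ k = x ^ (-k) * y := fun k => by
      rw [← _root_.inv_zpow', ← hyx, conj_zpow]; group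
    rintro (i | i) (j | j)
    · simp only [a_mul_a]
      rw [hpow (k := i.cast + j.cast) (by push_cast [ZMod.intCast_zmod_cast]; ring),
        _root_.zpow_add]
    · simp only [a_mul_xa]
      rw [hpow (k := -i.cast + j.cast) (by push_cast [ZMod.intCast_zmod_cast]; ring),
        _root_.zpow_add, ← mul_assoc, hconj, neg_neg, mul_assoc]
    · simp only [xa_mul_a]
      rw [hpow (k := i.cast + j.cast) (by push_cast [ZMod.intCast_zmod_cast]; ring),
        _root_.zpow_add, mul_assoc]
    · simp only [xa_mul_xa]
      rw [hpow (k := n + (-i.cast + j.cast)) (by push_cast [ZMod.intCast_zmod_cast]; ring),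
        hconj, mul_assoc, ← mul_assoc y, ← sq, hy, ← zpow_natCast]
      group

@[simp] theorem lift_a (hx : x ^ (2 * n) = 1) (hy : y ^ 2 = x ^ n) (hyx : y * x * y⁻¹ = x⁻¹)
    (i : ZMod (2 * n)) : lift hx hy hyx (a i) = x ^ (i.cast : ℤ) := rfl

@[simp] theorem lift_xa (hx : x ^ (2 * n) = 1) (hy : y ^ 2 = x ^ n) (hyx : y * x * y⁻¹ = x⁻¹)
    (i : ZMod (2 * n)) : lift hx hy hyx (xa i) = y * x ^ (i.cast : ℤ) := rfl

theorem lift_injective (hx : x ^ (2 * n) = 1) (hy : y ^ 2 = x ^ n) (hyx : y * x * y⁻¹ = x⁻¹)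
    (hxo : orderOf x = 2 * n) (hyH : y ∉ Subgroup.zpowers x) :
    Function.Injective (lift hx hy hyx) := by
  rw [injective_iff_map_eq_one]
  rintro (i | i) h
  · rw [lift_a, zpow_eq_one_iff_modEq, hxo, ← ZMod.intCast_eq_intCast_iff,
      ZMod.intCast_zmod_cast] at h
    rw [h, Int.cast_zero, a_zero]
  · rw [lift_xa, mul_eq_one_iff_eq_inv] at h
    exact absurd (h ▸ Subgroup.inv_mem _ (Subgroup.zpow_mem_zpowers x _)) hyH

end QuaternionGroup

theorem exists_sq_ne_one {G : Type*} [Group G] [Finite G] (hcard : 2 < Nat.card G)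
    (hinv : ∀ g h : G, orderOf g = 2 → orderOf h = 2 → g = h) : ∃ x : G, x ^ 2 ≠ 1 := by
  classical
  have := Fintype.ofFinite G
  by_contra! hsq
  have : Nontrivial G := Finite.one_lt_card_iff_nontrivial.mp (by omega)
  obtain ⟨z, hz⟩ := exists_ne (1 : G)
  have hG : (Finset.univ : Finset G) ⊆ {1, z} := fun g _ => by
    by_cases hg : g = 1
    · simp [hg]
    · simp [hinv g z (orderOf_eq_prime (hsq g) hg) (orderOf_eq_prime (hsq z) hz)]
  have := Finset.card_le_card hG
  rw [Finset.card_univ, ← Nat.card_eq_fintype_card] at this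
  have := Finset.card_le_two (a := (1 : G)) (b := z)
  omega

theorem nonempty_mulEquiv_quaternionGroup_two {G : Type*} [Group G] [Finite G]
    (hcard : Nat.card G = 8) (hexp : ∀ g : G, g ^ 4 = 1)
    (hinv : ∀ g h : G, orderOf g = 2 → orderOf h = 2 → g = h) :
    Nonempty (G ≃* QuaternionGroup 2) := by
  obtain ⟨x, hx⟩ := exists_sq_ne_one (by omega) hinv
  have hxo : orderOf x = 2 * 2 :=
    orderOf_eq_prime_pow (p := 2) (n := 1) (by simpa using hx) (hexp x)
  have hx2o : orderOf (x ^ 2) = 2 := orderOf_eq_prime (by rw [← pow_mul]; exact hexp x) hx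
  have hsq : ∀ g ∉ Subgroup.zpowers x, g ^ 2 = x ^ 2 := by
    intro g hg
    have hg2 : g ^ 2 ≠ 1 := by
      intro h
      have hg1 : g ≠ 1 := fun h1 => hg (h1 ▸ Subgroup.one_mem _)
      exact hg (hinv g (x ^ 2) (orderOf_eq_prime h hg1) hx2o ▸ Subgroup.npow_mem_zpowers x 2)
    exact hinv _ _ (orderOf_eq_prime (by rw [← pow_mul]; exact hexp g) hg2) hx2o
  obtain ⟨y, hy⟩ : ∃ y, y ∉ Subgroup.zpowers x := by
    by_contra! h
    have := Subgroup.card_top (G := G)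
    rw [← (Subgroup.eq_top_iff' _).mpr h, Nat.card_zpowers, hxo, hcard] at this
    omega
  have hyx : y * x ∉ Subgroup.zpowers x := fun h =>
    hy (by simpa using Subgroup.mul_mem _ h (Subgroup.inv_mem _ (Subgroup.mem_zpowers x)))
  have hconj : y * x * y⁻¹ = x⁻¹ :=
    calc y * x * y⁻¹ = x⁻¹ * y⁻¹ * ((y * x) * (y * x)) * y⁻¹ := by group
      _ = x⁻¹ * y⁻¹ * (y * y) * y⁻¹ := by rw [← sq, ← sq, hsq _ hyx, hsq _ hy]
      _ = x⁻¹ := by group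
  have hinj := QuaternionGroup.lift_injective (hexp x) (hsq y hy) hconj hxo hy
  refine ⟨(MulEquiv.ofBijective _ (hinj.bijective_of_nat_card_le ?_)).symm⟩
  rw [hcard, Nat.card_eq_fintype_card, QuaternionGroup.card]

theorem Matrix.sq_eq_trace_smul_sub_det_smul_one {R : Type*} [CommRing R]
    (M : Matrix (Fin 2) (Fin 2) R) : M ^ 2 = M.trace • M - M.det • 1 := by
  ext i j
  fin_cases i <;> fin_cases j <;>
    simp [sq, mul_apply, trace_fin_two, det_fin_two] <;> ring

namespace Matrix.SpecialLinearGroup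

variable {R : Type*} [CommRing R]

theorem coe_sq_eq_trace_smul_sub_one (g : SL(2, R)) :
    (g : Matrix (Fin 2) (Fin 2) R) ^ 2 = trace (g : Matrix (Fin 2) (Fin 2) R) • g - 1 := by
  rw [sq_eq_trace_smul_sub_det_smul_one, g.det_coe, one_smul]

theorem trace_sq (g : SL(2, R)) :
    trace ((g ^ 2 : SL(2, R)) : Matrix (Fin 2) (Fin 2) R) =
      trace (g : Matrix (Fin 2) (Fin 2) R) ^ 2 - 2 := by
  rw [coe_pow, coe_sq_eq_trace_smul_sub_one, trace_sub, trace_smul, trace_one]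
  simp [sq]

theorem eq_one_or_neg_one_of_sq_eq_one [NoZeroDivisors R] (h2 : (2 : R) ≠ 0) {g : SL(2, R)}
    (hg : g ^ 2 = 1) : g = 1 ∨ g = -1 := by
  have hinv : g⁻¹ = g := inv_eq_of_mul_eq_one_right (by rw [← sq, hg])
  rw [SL2_inv_expl] at hinv
  have e := fun i j => congrFun (congrFun (congrArg Subtype.val hinv) i) j
  have h11 : g 1 1 = g 0 0 := by simpa using e 0 0
  have h01 : g 0 1 = 0 := by
    have : (2 : R) * g 0 1 = 0 := by linear_combination -(by simpa using e 0 1 : -g 0 1 = g 0 1)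
    exact (mul_eq_zero.mp this).resolve_left h2
  have h10 : g 1 0 = 0 := by
    have : (2 : R) * g 1 0 = 0 := by linear_combination -(by simpa using e 1 0 : -g 1 0 = g 1 0)
    exact (mul_eq_zero.mp this).resolve_left h2
  have hdet : g 0 0 * g 0 0 = 1 := by
    have := g.det_coe
    rwa [det_fin_two, h11, h01, h10, mul_zero, sub_zero] at this
  rcases mul_self_eq_one_iff.mp hdet with h | h
  · left; ext i j; fin_cases i <;> fin_cases j <;> simp [h, h01, h10, h11]
  · right; ext i j; fin_cases i <;> fin_cases j <;> simp [h, h01, h10, h11]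

theorem trace_eq_zero_of_sq_eq_neg_one [IsDomain R] {g : SL(2, R)} (hg : g ^ 2 = -1) :
    trace (g : Matrix (Fin 2) (Fin 2) R) = 0 := by
  have h := coe_sq_eq_trace_smul_sub_one g
  rw [← coe_pow, hg, coe_neg, coe_one, neg_eq_iff_eq_neg, neg_sub, eq_comm, sub_eq_self] at h
  refine (smul_eq_zero.mp h).resolve_right fun h0 => ?_
  simpa [h0] using g.det_coe

theorem eq_neg_one_of_orderOf_eq_two [NoZeroDivisors R] (h2 : (2 : R) ≠ 0) {g : SL(2, R)}
    (hg : orderOf g = 2) : g = -1 :=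
  (eq_one_or_neg_one_of_sq_eq_one h2 (orderOf_dvd_iff_pow_eq_one.mp hg.dvd)).resolve_left
    fun h1 => by simp [h1] at hg

theorem pow_four_eq_one_of_pow_eight_eq_one [IsDomain R] (h2 : ¬IsSquare (2 : R))
    {g : SL(2, R)} (hg : g ^ 8 = 1) : g ^ 4 = 1 := by
  have h2' : (2 : R) ≠ 0 := fun h => h2 ⟨0, by simp [h]⟩
  refine (eq_one_or_neg_one_of_sq_eq_one h2' (by rw [← pow_mul]; exact hg)).resolve_right
    fun h4 => h2 ⟨trace (g : Matrix (Fin 2) (Fin 2) R), ?_⟩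
  have := trace_eq_zero_of_sq_eq_neg_one (g := g ^ 2) (by rw [← pow_mul]; exact h4)
  rw [trace_sq] at this
  linear_combination -this

theorem card_mul_card_units {n : Type*} [Fintype n] [DecidableEq n] [Nonempty n] :
    Nat.card (SpecialLinearGroup n R) * Nat.card Rˣ = Nat.card (GL n R) := by
  have hrange :
      (toGL : SpecialLinearGroup n R →* GL n R).range = GeneralLinearGroup.det.ker := by
    ext u
    constructor
    · rintro ⟨g, rfl⟩
      exact coeToGL_det g
    · intro h
      exact ⟨⟨u, congrArg Units.val h⟩, Units.ext rfl⟩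
  rw [← Subgroup.card_mul_index GeneralLinearGroup.det.ker, Subgroup.index_ker,
    MonoidHom.range_eq_top_of_surjective _ GeneralLinearGroup.det_surjective, Subgroup.card_top,
    ← hrange, Nat.card_congr (MonoidHom.ofInjective toGL_injective).toEquiv]

theorem card_fin_two (F : Type*) [Field F] [Fintype F] :
    Nat.card SL(2, F) = Fintype.card F * (Fintype.card F ^ 2 - 1) := by
  have h := card_mul_card_units (n := Fin 2) (R := F)
  rw [card_GL_field, Fin.prod_univ_two, Nat.card_units, Nat.card_eq_fintype_card (α := F)] at h
  have hq : 1 < Fintype.card F := Fintype.one_lt_card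
  generalize Fintype.card F = q at h hq ⊢
  refine Nat.eq_of_mul_eq_mul_right (by omega : 0 < q - 1) (h.trans ?_)
  have : 1 ≤ q ^ 2 := Nat.one_le_pow _ _ (by omega)
  have : q ≤ q ^ 2 := Nat.le_self_pow two_ne_zero q
  simp only [Fin.isValue, Fin.val_zero, Fin.val_one, pow_zero, pow_one]
  zify [*, hq.le]
  ring

end Matrix.SpecialLinearGroup

theorem mul_sq_sub_one_mod_sixteen {q : ℕ} (hq : q % 8 = 3 ∨ q % 8 = 5) :
    q * (q ^ 2 - 1) % 16 = 8 := by
  have hq1 : 1 ≤ q ^ 2 := Nat.one_le_pow _ _ (by omega)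
  have h : q % 16 = 3 ∨ q % 16 = 5 ∨ q % 16 = 11 ∨ q % 16 = 13 := by omega
  rw [← ZMod.val_natCast, Nat.cast_mul, Nat.cast_sub hq1, Nat.cast_pow, Nat.cast_one,
    ← ZMod.natCast_mod q 16]
  rcases h with h | h | h | h <;> rw [h] <;> rfl

theorem Sylow.card_eq_pow_of_dvd_of_not_dvd {G : Type*} [Group G] [Finite G] {p n : ℕ}
    [hp : Fact p.Prime] (P : Sylow p G) (hdvd : p ^ n ∣ Nat.card G)
    (hndvd : ¬p ^ (n + 1) ∣ Nat.card G) : Nat.card P = p ^ n := by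
  have hG : Nat.card G ≠ 0 := Nat.card_pos.ne'
  rw [hp.out.pow_dvd_iff_le_factorization hG] at hdvd hndvd
  rw [P.card_eq_multiplicity]
  congr 1
  omega

/-- If `q ≡ ±3 (mod 8)`, then every Sylow `2`-subgroup of `SL(2, F)` is isomorphic to
the quaternion group of order `8`. -/
theorem sylow_two_quaternion
    (F : Type*) [Field F] [Fintype F] (q : ℕ) (hq : Fintype.card F = q)
    (hmod : q % 8 = 3 ∨ q % 8 = 5) :
    ∀ P : Sylow 2 SL(2, F), Nonempty ((P : Subgroup SL(2, F)) ≃* QuaternionGroup 2) := by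
  intro P
  have h2 : ¬IsSquare (2 : F) := by
    rw [FiniteField.isSquare_two_iff, hq]
    omega
  have h2' : (2 : F) ≠ 0 := fun h => h2 ⟨0, by simp [h]⟩
  have hcardG : Nat.card SL(2, F) % 16 = 8 := by
    rw [SpecialLinearGroup.card_fin_two, hq]
    exact mul_sq_sub_one_mod_sixteen hmod
  have hcardP : Nat.card P = 8 :=
    P.card_eq_pow_of_dvd_of_not_dvd (n := 3) (by norm_num; omega) (by norm_num; omega)
  refine nonempty_mulEquiv_quaternionGroup_two hcardP (fun g => ?_) (fun g h hg hh => ?_)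
  · refine Subtype.ext (SpecialLinearGroup.pow_four_eq_one_of_pow_eight_eq_one h2 ?_)
    rw [← Subgroup.coe_pow, ← hcardP, pow_card_eq_one', Subgroup.coe_one]
  · rw [← Subgroup.orderOf_coe] at hg hh
    exact Subtype.ext ((SpecialLinearGroup.eq_neg_one_of_orderOf_eq_two h2' hg).trans
      (SpecialLinearGroup.eq_neg_one_of_orderOf_eq_two h2' hh).symm)
end

section
/- Assume q ≡ 5 (mod 8) and let H be a subgroup of SL₂(F) of order 4. Then the normalizer of H in SL₂(F) has cardinality 2(q−1). -/
/-!
Since `q` is odd, `-1` is the only involution of `SL(2, F)`, so a subgroup `H` of order `4` is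
cyclic, generated by some `x` with `x ^ 2 = -1`. Since `q ≡ 1 (mod 4)`, `F` contains a square
root `u` of `-1`; then `x` has the distinct eigenvalues `u, -u` and is conjugate in `SL(2, F)` to
`diag(u, -u)`. An element normalizes `⟨diag(u, -u)⟩` iff it commutes with `diag(u, -u)` or inverts
it, i.e. iff it is a diagonal or an antidiagonal matrix, and `SL(2, F)` contains `q - 1` of each.
-/

open Matrix
open scoped MatrixGroups

section Group

variable {G : Type*} [Group G]

theorem exists_sq_eq_and_eq_zpowers_of_card_eq_four {z : G}
    (hz : ∀ g : G, g ^ 2 = 1 → g = 1 ∨ g = z) {H : Subgroup G} (hH : Nat.card H = 4) :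
    ∃ x : G, x ^ 2 = z ∧ H = Subgroup.zpowers x := by
  have : Finite H := Nat.finite_of_card_ne_zero (by omega)
  obtain ⟨x, hxH, hx2⟩ : ∃ x ∈ H, x ^ 2 ≠ 1 := by
    by_contra! hall
    have hsub : (H : Set G) ⊆ {1, z} := fun g hg => hz g (hall g hg)
    have := (Set.ncard_le_ncard hsub (Set.toFinite _)).trans (Set.ncard_insert_le 1 {z})
    rw [← Nat.card_coe_set_eq, SetLike.coe_sort_coe, hH] at this
    simp at this
  have hx4 : x ^ 4 = 1 := by
    have := congrArg Subtype.val (pow_card_eq_one' (G := H) (x := ⟨x, hxH⟩))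
    rwa [hH, Subgroup.coe_pow] at this
  have hord : orderOf x = 4 := orderOf_eq_prime_pow (p := 2) (n := 1) (by simpa) (by simpa)
  refine ⟨x, (hz _ (by rw [← pow_mul]; exact hx4)).resolve_left hx2, ?_⟩
  refine (Subgroup.eq_of_le_of_card_ge (Subgroup.zpowers_le.2 hxH) ?_).symm
  rw [hH, Nat.card_zpowers, hord]

theorem mem_normalizer_zpowers_iff {x g : G} (hx4 : x ^ 4 = 1) (hx2 : x ^ 2 ≠ 1) :
    g ∈ Subgroup.normalizer (Subgroup.zpowers x : Set G) ↔
      g * x = x * g ∨ g * x = x⁻¹ * g := by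
  classical
  constructor
  · intro hg
    have hconj : g * x * g⁻¹ ∈ Subgroup.zpowers x :=
      (Subgroup.mem_normalizer_iff.mp hg x).mp (Subgroup.mem_zpowers x)
    have hconj2 : (g * x * g⁻¹) ^ 2 ≠ 1 := by simpa [conj_pow] using hx2
    have hord : orderOf x = 4 := orderOf_eq_prime_pow (p := 2) (n := 1) (by simpa) (by simpa)
    rw [(orderOf_pos_iff.mp (hord ▸ four_pos)).mem_zpowers_iff_mem_range_orderOf, hord] at hconj
    obtain ⟨k, hk, hxk⟩ := Finset.mem_image.mp hconj
    rw [Finset.mem_range] at hk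
    rw [← mul_inv_eq_iff_eq_mul, ← mul_inv_eq_iff_eq_mul]
    interval_cases k
    · simp [← hxk] at hconj2
    · exact .inl (by simpa using hxk.symm)
    · rw [← hxk, ← pow_mul] at hconj2
      exact absurd hx4 hconj2
    · exact .inr (hxk ▸ eq_inv_of_mul_eq_one_left (by rw [← pow_succ, hx4]))
  · rintro (h | h) <;> rw [Subgroup.mem_normalizer_iff_map_conj_eq, MonoidHom.map_zpowers]
    · simp [h]
    · simp [h]

theorem card_normalizer_zpowers_eq_of_isConj {x y : G} (h : IsConj x y) :
    Nat.card (Subgroup.normalizer (Subgroup.zpowers x : Set G)) =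
      Nat.card (Subgroup.normalizer (Subgroup.zpowers y : Set G)) := by
  obtain ⟨g, rfl⟩ := isConj_iff.mp h
  rw [← Subgroup.card_map_of_injective (f := (MulAut.conj g).toMonoidHom)
      (MulAut.conj g).injective, Subgroup.map_equiv_normalizer_eq, MonoidHom.map_zpowers]
  rfl

end Group

theorem Units.val_inv_eq_neg_of_sq_eq_neg_one {R : Type*} [Ring R] {u : Rˣ}
    (hu : (u : R) ^ 2 = -1) : ((u⁻¹ : Rˣ) : R) = -u :=
  Units.inv_eq_of_mul_eq_one_right (by rw [mul_neg, ← sq, hu, neg_neg])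

namespace Matrix

variable {R : Type*} [CommRing R] [IsDomain R]

theorem mul_diag_eq_diag_mul_iff_fin_two {s t : R} (hst : s ≠ t) (M : Matrix (Fin 2) (Fin 2) R) :
    M * !![s, 0; 0, t] = !![s, 0; 0, t] * M ↔ M 0 1 = 0 ∧ M 1 0 = 0 := by
  simp only [← Matrix.ext_iff, Fin.forall_fin_two]
  simp [Matrix.mul_apply, mul_comm _ s, mul_comm _ t, hst, hst.symm]

theorem mul_diag_eq_diag_swap_mul_iff_fin_two {s t : R} (hst : s ≠ t)
    (M : Matrix (Fin 2) (Fin 2) R) :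
    M * !![s, 0; 0, t] = !![t, 0; 0, s] * M ↔ M 0 0 = 0 ∧ M 1 1 = 0 := by
  simp only [← Matrix.ext_iff, Fin.forall_fin_two]
  simp [Matrix.mul_apply, mul_comm _ s, mul_comm _ t, hst, hst.symm]

end Matrix

namespace Matrix.SpecialLinearGroup.SL2

variable {F : Type*} [Field F]

theorem det_fin_two_eq_one (g : SL(2, F)) : g 0 0 * g 1 1 - g 0 1 * g 1 0 = 1 :=
  (det_fin_two _).symm.trans g.2

theorem eq_one_or_eq_neg_one_of_sq_eq_one (h2 : (2 : F) ≠ 0) {z : SL(2, F)} (hz : z ^ 2 = 1) :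
    z = 1 ∨ z = -1 := by
  have hinv := congrArg (fun w : SL(2, F) => (w : Matrix (Fin 2) (Fin 2) F))
    (inv_eq_of_mul_eq_one_right (by rwa [← sq] : z * z = 1))
  simp only [coe_inv, adjugate_fin_two, ← Matrix.ext_iff, of_apply, cons_val', cons_val_fin_one,
    Fin.forall_fin_two, cons_val_zero, cons_val_one] at hinv
  obtain ⟨⟨hda, hb⟩, hc, -⟩ := hinv
  have hb : z 0 1 = 0 :=
    (mul_eq_zero.mp (by linear_combination -hb : (2 : F) * z 0 1 = 0)).resolve_left h2
  have hc : z 1 0 = 0 :=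
    (mul_eq_zero.mp (by linear_combination -hc : (2 : F) * z 1 0 = 0)).resolve_left h2
  have ha : z 0 0 * z 0 0 = 1 := by
    linear_combination det_fin_two_eq_one z - z 0 0 * hda + z 1 0 * hb
  rcases mul_self_eq_one_iff.mp ha with ha | ha
  · left; ext i j; fin_cases i <;> fin_cases j <;> simp [ha, hb, hc, hda]
  · right; ext i j; fin_cases i <;> fin_cases j <;> simp [ha, hb, hc, hda]

theorem trace_eq_zero_of_sq_eq_neg_one {x : SL(2, F)} (hx : x ^ 2 = -1) : x 0 0 + x 1 1 = 0 := by
  have hx := congrArg (fun w : SL(2, F) => (w : Matrix (Fin 2) (Fin 2) F)) hx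
  simp only [sq, coe_mul, coe_neg, coe_one, ← Matrix.ext_iff, Matrix.mul_apply, Fin.sum_univ_two,
    Matrix.neg_apply, Fin.forall_fin_two, one_apply_eq] at hx
  obtain ⟨⟨h00, -⟩, -, h11⟩ := hx
  have : (x 0 0 + x 1 1) ^ 2 = 0 := by
    linear_combination h00 + h11 + 2 * det_fin_two_eq_one x
  exact pow_eq_zero_iff two_ne_zero |>.mp this

def torus : Fˣ →* SL(2, F) where
  toFun u := ⟨!![(u : F), 0; 0, ((u⁻¹ : Fˣ) : F)], by simp [det_fin_two_of]⟩
  map_one' := by ext i j; fin_cases i <;> fin_cases j <;> simp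
  map_mul' u v := Subtype.ext <| by
    change _ = !![(u : F), 0; 0, ((u⁻¹ : Fˣ) : F)] * !![(v : F), 0; 0, ((v⁻¹ : Fˣ) : F)]
    simp [mul_comm]

def antidiag (b : Fˣ) : SL(2, F) :=
  ⟨!![0, (b : F); -((b⁻¹ : Fˣ) : F), 0], by simp [det_fin_two_of]⟩

def monomial : Fˣ ⊕ Fˣ → SL(2, F) := Sum.elim torus antidiag

@[simp]
theorem coe_torus (u : Fˣ) :
    (torus u : Matrix (Fin 2) (Fin 2) F) = !![(u : F), 0; 0, ((u⁻¹ : Fˣ) : F)] := rfl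

@[simp]
theorem coe_antidiag (b : Fˣ) :
    (antidiag b : Matrix (Fin 2) (Fin 2) F) = !![0, (b : F); -((b⁻¹ : Fˣ) : F), 0] := rfl

theorem torus_injective : Function.Injective (torus (F := F)) := fun u v h =>
  Units.ext (by simpa using congrArg (fun g : SL(2, F) => g 0 0) h)

theorem monomial_injective : Function.Injective (monomial (F := F)) := by
  refine torus_injective.sumElim ?_ ?_
  · intro u v h
    exact Units.ext (by simpa using congrArg (fun g : SL(2, F) => g 0 1) h)
  · intro u v h
    simpa using congrArg (fun g : SL(2, F) => g 0 0) h

theorem mem_range_monomial_iff (g : SL(2, F)) :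
    g ∈ Set.range monomial ↔ (g 0 1 = 0 ∧ g 1 0 = 0) ∨ (g 0 0 = 0 ∧ g 1 1 = 0) := by
  constructor
  · rintro ⟨u | b, rfl⟩ <;> simp [monomial]
  · rintro (⟨hb, hc⟩ | ⟨ha, hd⟩)
    · have had : g 0 0 * g 1 1 = 1 := by simpa [hb, hc] using det_fin_two_eq_one g
      refine ⟨.inl (Units.mkOfMulEqOne _ _ had), ?_⟩
      ext i j
      fin_cases i <;> fin_cases j <;> simp [monomial, hb, hc, inv_eq_of_mul_eq_one_right had]
    · have hbc : g 0 1 * -g 1 0 = 1 := by simpa [ha, hd] using det_fin_two_eq_one g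
      refine ⟨.inr (Units.mkOfMulEqOne _ _ hbc), ?_⟩
      ext i j
      fin_cases i <;> fin_cases j <;> simp [monomial, ha, hd, inv_eq_of_mul_eq_one_right hbc]

theorem isConj_torus_inv (u : Fˣ) : IsConj (torus u) (torus u⁻¹) := by
  refine ⟨toUnits (antidiag 1), ?_⟩
  ext i j
  fin_cases i <;> fin_cases j <;> simp

theorem isConj_torus_of_sq_eq_neg_one_of_add_ne_zero (h2 : (2 : F) ≠ 0) {u : Fˣ}
    (hu : (u : F) ^ 2 = -1) {x : SL(2, F)} (hx : x ^ 2 = -1) (hxu : x 0 0 + u ≠ 0) :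
    IsConj (torus u) x := by
  have hd : x 1 1 = -x 0 0 := by linear_combination trace_eq_zero_of_sq_eq_neg_one hx
  have hbc : x 0 0 ^ 2 + x 0 1 * x 1 0 = -1 := by
    linear_combination -det_fin_two_eq_one x + x 0 0 * hd
  set s : F := (2 * u * (x 0 0 + u))⁻¹
  have hs : s * (2 * u * (x 0 0 + u)) = 1 :=
    inv_mul_cancel₀ (mul_ne_zero (mul_ne_zero h2 u.ne_zero) hxu)
  -- The columns of `P` are the first column of `x + u` and the second column of `u - x`,
  -- eigenvectors of `x` for `u` and `-u`, the latter rescaled so that `det P = 1`.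
  obtain ⟨P, hP⟩ : ∃ P : SL(2, F),
      (P : Matrix (Fin 2) (Fin 2) F) = !![x 0 0 + u, -x 0 1 * s; x 1 0, (x 0 0 + u) * s] :=
    ⟨⟨_, by rw [det_fin_two_of]; linear_combination hs + s * hbc - s * hu⟩, rfl⟩
  suffices hP : P * torus u = x * P from ⟨toUnits P, hP⟩
  ext i j
  fin_cases i <;> fin_cases j <;>
    simp [hP, coe_mul, Matrix.mul_apply, Units.val_inv_eq_neg_of_sq_eq_neg_one hu, hd]
  · linear_combination hu - hbc
  · ring
  · ring
  · linear_combination s * hbc - s * hu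

theorem isConj_torus_of_sq_eq_neg_one (h2 : (2 : F) ≠ 0) {u : Fˣ} (hu : (u : F) ^ 2 = -1)
    {x : SL(2, F)} (hx : x ^ 2 = -1) : IsConj (torus u) x := by
  by_cases hxu : x 0 0 + u = 0
  · have hu' := Units.val_inv_eq_neg_of_sq_eq_neg_one hu
    refine (isConj_torus_inv u).trans
      (isConj_torus_of_sq_eq_neg_one_of_add_ne_zero h2 (by rw [hu', neg_sq, hu]) hx ?_)
    have : x 0 0 + ((u⁻¹ : Fˣ) : F) = -(2 * u) := by rw [hu']; linear_combination hxu
    rw [this, neg_ne_zero]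
    exact mul_ne_zero h2 u.ne_zero
  · exact isConj_torus_of_sq_eq_neg_one_of_add_ne_zero h2 hu hx hxu

theorem mul_torus_eq_torus_mul_iff {u : Fˣ} (hu : (u : F) ≠ ((u⁻¹ : Fˣ) : F)) (g : SL(2, F)) :
    g * torus u = torus u * g ↔ g 0 1 = 0 ∧ g 1 0 = 0 := by
  rw [SpecialLinearGroup.ext_iff, Matrix.ext_iff, coe_mul, coe_mul, coe_torus]
  exact mul_diag_eq_diag_mul_iff_fin_two hu _

theorem mul_torus_eq_torus_inv_mul_iff {u : Fˣ} (hu : (u : F) ≠ ((u⁻¹ : Fˣ) : F))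
    (g : SL(2, F)) :
    g * torus u = torus u⁻¹ * g ↔ g 0 0 = 0 ∧ g 1 1 = 0 := by
  rw [SpecialLinearGroup.ext_iff, Matrix.ext_iff, coe_mul, coe_mul, coe_torus, coe_torus, inv_inv]
  exact mul_diag_eq_diag_swap_mul_iff_fin_two hu _

theorem mem_normalizer_zpowers_torus_iff (h2 : (2 : F) ≠ 0) {u : Fˣ} (hu : (u : F) ^ 2 = -1)
    (g : SL(2, F)) :
    g ∈ Subgroup.normalizer (Subgroup.zpowers (torus u) : Set SL(2, F)) ↔
      g ∈ Set.range monomial := by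
  have hne : (u : F) ≠ ((u⁻¹ : Fˣ) : F) := by
    rw [Units.val_inv_eq_neg_of_sq_eq_neg_one hu]
    exact fun h => mul_ne_zero h2 u.ne_zero (by linear_combination h)
  have h4 : torus u ^ 4 = 1 := by
    rw [← map_pow, ← map_one torus]
    exact congrArg torus (Units.ext (by push_cast; linear_combination ((u : F) ^ 2 - 1) * hu))
  have h2' : torus u ^ 2 ≠ 1 := by
    rw [← map_pow, ← map_one torus, torus_injective.ne_iff, Ne, Units.ext_iff]
    push_cast
    exact fun h => h2 (by linear_combination hu - h)
  rw [mem_normalizer_zpowers_iff h4 h2', ← map_inv, mul_torus_eq_torus_mul_iff hne,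
    mul_torus_eq_torus_inv_mul_iff hne, mem_range_monomial_iff]

theorem card_normalizer_zpowers_torus [Fintype F] (h2 : (2 : F) ≠ 0) {u : Fˣ}
    (hu : (u : F) ^ 2 = -1) :
    Nat.card (Subgroup.normalizer (Subgroup.zpowers (torus u) : Set SL(2, F))) =
      2 * (Fintype.card F - 1) := by
  have : (Subgroup.normalizer (Subgroup.zpowers (torus u) : Set SL(2, F)) : Set SL(2, F)) =
      Set.range monomial := Set.ext (mem_normalizer_zpowers_torus_iff h2 hu)
  rw [← SetLike.coe_sort_coe, this, Nat.card_range_of_injective monomial_injective, Nat.card_sum,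
    Nat.card_units, Nat.card_eq_fintype_card, two_mul]

end Matrix.SpecialLinearGroup.SL2

/-- If `q ≡ 5 (mod 8)` and `H` is a subgroup of `SL(2, F)` of order `4`, then the
normalizer of `H` in `SL(2, F)` has cardinality `2 (q - 1)`. -/
theorem normalizer_order_four_card_q_sub_one
    (F : Type*) [Field F] [Fintype F] (q : ℕ) (hq : Fintype.card F = q)
    (hmod : q % 8 = 5) (H : Subgroup SL(2, F)) (hH : Nat.card H = 4) :
    Nat.card (Subgroup.normalizer (H : Set SL(2, F))) = 2 * (q - 1) := by
  subst hq
  have h2 : (2 : F) ≠ 0 :=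
    Ring.two_ne_zero fun h => by have := FiniteField.even_card_iff_char_two.mp h; omega
  obtain ⟨i, hi⟩ := FiniteField.isSquare_neg_one_iff.mpr (by omega : Fintype.card F % 4 ≠ 3)
  have hi0 : i ≠ 0 := by rintro rfl; simp at hi
  have hu : ((Units.mk0 i hi0 : Fˣ) : F) ^ 2 = -1 := by simp [sq, hi]
  obtain ⟨x, hx, rfl⟩ := exists_sq_eq_and_eq_zpowers_of_card_eq_four
    (fun _ => SpecialLinearGroup.SL2.eq_one_or_eq_neg_one_of_sq_eq_one h2) hH
  rw [card_normalizer_zpowers_eq_of_isConj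
      (SpecialLinearGroup.SL2.isConj_torus_of_sq_eq_neg_one h2 hu hx).symm,
    SpecialLinearGroup.SL2.card_normalizer_zpowers_torus h2 hu]
end
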